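/- Correctness of forward-mode AD for quotients: let f, g : ℝ^N → ℝ be twice continuously differentiable at a ∈ ℝ^N with g(a) ≠ 0, and let T_a(h) = (h(a), ∇h(a), Hess h(a)) ∈ D2(N). Then T_a(f/g) · T_a(g) = T_a(f) in D2(N); equivalently, the gradient and Hessian of the quotient f/g at a are given by the dual-number division formula: ∇(f/g)(a) = ∇f(a)/g(a) − (f(a)/g(a)²)∇g(a) and Hess(f/g)(a) = Hess f(a)/g(a) − (∇f(a)∇g(a)ᵀ + ∇g(a)∇f(a)ᵀ)/g(a)² + 2f(a)(∇g(a)∇g(a)ᵀ)/g(a)³ − (f(a)/g(a)²)·Hess g(a). -/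

import Mathlib

/-- Second-order dual numbers of dimension `N`: a value, a gradient part, and a Hessian part. -/
abbrev D2 (N : ℕ) : Type := ℝ × (Fin N → ℝ) × Matrix (Fin N) (Fin N) ℝ

/-- Multiplication of second-order dual numbers. -/
noncomputable def D2.mul {N : ℕ} (x y : D2 N) : D2 N :=
  (x.1 * y.1,
   x.1 • y.2.1 + y.1 • x.2.1,
   y.1 • x.2.2 + x.1 • y.2.2 + Matrix.vecMulVec x.2.1 y.2.1 + Matrix.vecMulVec y.2.1 x.2.1)

/-- The gradient of a scalar function on `ℝ^N`. -/
noncomputable def grad {N : ℕ} (h : (Fin N → ℝ) → ℝ) (a : Fin N → ℝ) : Fin N → ℝ :=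
  fun i => fderiv ℝ h a (Pi.single i 1)

/-- The Hessian matrix of a scalar function on `ℝ^N`. -/
noncomputable def hess {N : ℕ} (h : (Fin N → ℝ) → ℝ) (a : Fin N → ℝ) :
    Matrix (Fin N) (Fin N) ℝ :=
  Matrix.of fun i j => fderiv ℝ (fun x => fderiv ℝ h x (Pi.single j 1)) a (Pi.single i 1)

/-- The second-order dual lift `T_a(h) = (h(a), ∇h(a), Hess h(a))`. -/
noncomputable def dualLift {N : ℕ} (h : (Fin N → ℝ) → ℝ) (a : Fin N → ℝ) : D2 N :=
  (h a, grad h a, hess h a)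

/-! Near `a` the numerator factors as `f = (f / g) * g`, so the Leibniz rules for the gradient
and the Hessian give `T_a(f) = T_a(f / g) · T_a(g)`. As `g a ≠ 0`, this equation in `D2 N` can be
solved for the gradient and Hessian parts of `T_a(f / g)`, which yields the division formulas. -/

open Filter Topology

section

variable {𝕜 E F : Type*} [NontriviallyNormedField 𝕜] [NormedAddCommGroup E] [NormedSpace 𝕜 E]
  [NormedAddCommGroup F] [NormedSpace 𝕜 F] {f : E → F} {x : E} {n : WithTop ℕ∞}

theorem ContDiffAt.eventually_differentiableAt (h : ContDiffAt 𝕜 n f x) (hn : 1 ≤ n) :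
    ∀ᶠ y in 𝓝 x, DifferentiableAt 𝕜 f y :=
  ((h.of_le hn).eventually (by simp)).mono fun _ hy => hy.differentiableAt one_ne_zero

theorem ContDiffAt.differentiableAt_fderiv_apply (h : ContDiffAt 𝕜 n f x) (hn : 2 ≤ n) (e : E) :
    DifferentiableAt 𝕜 (fun y => fderiv 𝕜 f y e) x :=
  ((h.fderiv_right (m := 1) hn).differentiableAt one_ne_zero).clm_apply (differentiableAt_const e)

end

section

variable {N : ℕ} {u v : (Fin N → ℝ) → ℝ} {a : Fin N → ℝ}

theorem Filter.EventuallyEq.grad_eq (h : u =ᶠ[𝓝 a] v) : grad u a = grad v a := by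
  unfold grad
  rw [h.fderiv_eq]

theorem Filter.EventuallyEq.hess_eq (h : u =ᶠ[𝓝 a] v) : hess u a = hess v a := by
  ext i j
  have hdir : (fun x => fderiv ℝ u x (Pi.single j 1)) =ᶠ[𝓝 a]
      fun x => fderiv ℝ v x (Pi.single j 1) :=
    (h.fderiv (𝕜 := ℝ)).mono fun _ hx => congrArg (· (Pi.single j 1)) hx
  simp only [hess, Matrix.of_apply, hdir.fderiv_eq]

theorem Filter.EventuallyEq.dualLift_eq (h : u =ᶠ[𝓝 a] v) : dualLift u a = dualLift v a := by
  simp only [dualLift, h.eq_of_nhds, h.grad_eq, h.hess_eq]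

theorem grad_mul (hu : DifferentiableAt ℝ u a) (hv : DifferentiableAt ℝ v a) :
    grad (fun x => u x * v x) a = u a • grad v a + v a • grad u a := by
  ext i
  simp [grad, fderiv_fun_mul hu hv]

theorem hess_mul (hu : ContDiffAt ℝ 2 u a) (hv : ContDiffAt ℝ 2 v a) :
    hess (fun x => u x * v x) a = v a • hess u a + u a • hess v a
      + Matrix.vecMulVec (grad u a) (grad v a) + Matrix.vecMulVec (grad v a) (grad u a) := by
  ext i j
  have hdir : (fun x => fderiv ℝ (fun y => u y * v y) x (Pi.single j 1)) =ᶠ[𝓝 a]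
      fun x => u x * fderiv ℝ v x (Pi.single j 1) + v x * fderiv ℝ u x (Pi.single j 1) := by
    filter_upwards [hu.eventually_differentiableAt one_le_two,
      hv.eventually_differentiableAt one_le_two] with x hux hvx
    simp [fderiv_fun_mul hux hvx]
  have hua := hu.differentiableAt two_ne_zero
  have hva := hv.differentiableAt two_ne_zero
  have hdu := hu.differentiableAt_fderiv_apply le_rfl (Pi.single j 1)
  have hdv := hv.differentiableAt_fderiv_apply le_rfl (Pi.single j 1)
  simp only [hess, grad, Matrix.of_apply, Matrix.add_apply, Matrix.smul_apply,
    Matrix.vecMulVec_apply, smul_eq_mul]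
  rw [hdir.fderiv_eq, fderiv_fun_add (hua.fun_mul hdv) (hva.fun_mul hdu),
    fderiv_fun_mul hua hdv, fderiv_fun_mul hva hdu]
  simp only [add_apply, smul_apply, smul_eq_mul]
  ring

theorem dualLift_mul (hu : ContDiffAt ℝ 2 u a) (hv : ContDiffAt ℝ 2 v a) :
    dualLift (fun x => u x * v x) a = D2.mul (dualLift u a) (dualLift v a) :=
  Prod.ext rfl <| Prod.ext (grad_mul (hu.differentiableAt two_ne_zero)
    (hv.differentiableAt two_ne_zero)) (hess_mul hu hv)

end

namespace D2

variable {N : ℕ} {x y z : D2 N}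

theorem snd_fst_eq_of_mul_eq (h : mul x y = z) (hy : y.1 ≠ 0) :
    x.2.1 = (1 / y.1) • z.2.1 - (z.1 / y.1 ^ 2) • y.2.1 := by
  rw [← h]
  ext i
  simp only [mul, Pi.add_apply, Pi.sub_apply, Pi.smul_apply, smul_eq_mul]
  field_simp
  ring

theorem snd_snd_eq_of_mul_eq (h : mul x y = z) (hy : y.1 ≠ 0) :
    x.2.2 = (1 / y.1) • z.2.2
        - (1 / y.1 ^ 2) • (Matrix.vecMulVec z.2.1 y.2.1 + Matrix.vecMulVec y.2.1 z.2.1)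
        + (2 * z.1 / y.1 ^ 3) • Matrix.vecMulVec y.2.1 y.2.1
        - (z.1 / y.1 ^ 2) • y.2.2 := by
  rw [← h]
  ext i j
  simp only [mul, Matrix.add_apply, Matrix.sub_apply, Matrix.smul_apply, Matrix.vecMulVec_apply,
    Pi.add_apply, Pi.smul_apply, smul_eq_mul]
  field_simp
  ring

end D2

/-- Correctness of forward-mode AD for quotients: `T_a(f/g) · T_a(g) = T_a(f)`, and the
gradient and Hessian of the quotient are given by the dual-number division formula. -/
theorem dualLift_div {N : ℕ} (f g : (Fin N → ℝ) → ℝ) (a : Fin N → ℝ)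
    (hf : ContDiffAt ℝ 2 f a) (hg : ContDiffAt ℝ 2 g a) (hga : g a ≠ 0) :
    D2.mul (dualLift (fun x => f x / g x) a) (dualLift g a) = dualLift f a ∧
    grad (fun x => f x / g x) a = (1 / g a) • grad f a - (f a / g a ^ 2) • grad g a ∧
    hess (fun x => f x / g x) a =
      (1 / g a) • hess f a
        - (1 / g a ^ 2) • (Matrix.vecMulVec (grad f a) (grad g a)
            + Matrix.vecMulVec (grad g a) (grad f a))
        + (2 * f a / g a ^ 3) • Matrix.vecMulVec (grad g a) (grad g a)
        - (f a / g a ^ 2) • hess g a := by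
  have hf_eq : (fun x => f x / g x * g x) =ᶠ[𝓝 a] f :=
    (hg.continuousAt.eventually_ne hga).mono fun x hx => div_mul_cancel₀ (f x) hx
  have hmul : D2.mul (dualLift (fun x => f x / g x) a) (dualLift g a) = dualLift f a := by
    rw [← dualLift_mul (u := fun x => f x / g x) (hf.div hg hga) hg, hf_eq.dualLift_eq]
  exact ⟨hmul, D2.snd_fst_eq_of_mul_eq hmul hga, D2.snd_snd_eq_of_mul_eq hmul hga⟩
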